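/- Subexponential tail characterization: assume w is exponentially bounded and let mu in D_mu. Let nu^{1,(1)}_mu(k) = sum over j in N of nu^1_mu(k,j) be the marginal of nu^1_mu with respect to the first species. Then liminf as k -> infinity of -(1/k) * log nu^{1,(1)}_mu(k) equals 0 if and only if z(mu + epsilon*e_1) = infinity for every epsilon > 0, where e_1 = (1,0). The analogous statement holds for the second species with e_2 = (0,1). -/

import Mathlib

open Real Set Filter Topology

noncomputable section

/-- Euclidean norm `|k|` of a pair of naturals. -/
def knorm (k : ℕ × ℕ) : ℝ := Real.sqrt ((k.1 : ℝ) ^ 2 + (k.2 : ℝ) ^ 2)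

/-- Dot product `μ·k` of a chemical potential with an occupation vector. -/
def dotNat (μ : ℝ × ℝ) (k : ℕ × ℕ) : ℝ := μ.1 * k.1 + μ.2 * k.2

/-- Summand `w(k) exp(μ·k)` of the grand-canonical partition function. -/
def zsummand (w : ℕ × ℕ → ℝ) (μ : ℝ × ℝ) (k : ℕ × ℕ) : ℝ := w k * Real.exp (dotNat μ k)

/-- `dom z`: the set of `μ` where `z(μ) = ∑_k w(k) exp(μ·k)` is finite. -/
def domz (w : ℕ × ℕ → ℝ) : Set (ℝ × ℝ) := {μ | Summable (zsummand w μ)}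

/-- `D_μ`: the set of `μ` where `∑_k k_i w(k) exp(μ·k)` is finite for `i = 1,2`. -/
def Dmu (w : ℕ × ℕ → ℝ) : Set (ℝ × ℝ) :=
  {μ | Summable (fun k : ℕ × ℕ => (k.1 : ℝ) * zsummand w μ k) ∧
       Summable (fun k : ℕ × ℕ => (k.2 : ℝ) * zsummand w μ k)}

/-- `w` is exponentially bounded: `w(k) ≤ ξ^|k|` for some `ξ > 0`. -/
def ExpBounded (w : ℕ × ℕ → ℝ) : Prop := ∃ ξ : ℝ, 0 < ξ ∧ ∀ k : ℕ × ℕ, w k ≤ ξ ^ knorm k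

/-- The grand-canonical partition function `z(μ)`. -/
def zfun (w : ℕ × ℕ → ℝ) (μ : ℝ × ℝ) : ℝ := ∑' k : ℕ × ℕ, zsummand w μ k

/-- The pressure `p(μ) = log z(μ)`. -/
def press (w : ℕ × ℕ → ℝ) (μ : ℝ × ℝ) : ℝ := Real.log (zfun w μ)

/-- The single-site grand-canonical mass function `ν¹_μ(k) = w(k) exp(μ·k)/z(μ)`. -/
def nu1 (w : ℕ × ℕ → ℝ) (μ : ℝ × ℝ) (k : ℕ × ℕ) : ℝ := zsummand w μ k / zfun w μ

/-- Density of the first species `R₁(μ)`. -/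
def R1 (w : ℕ × ℕ → ℝ) (μ : ℝ × ℝ) : ℝ := ∑' k : ℕ × ℕ, (k.1 : ℝ) * nu1 w μ k

/-- Density of the second species `R₂(μ)`. -/
def R2 (w : ℕ × ℕ → ℝ) (μ : ℝ × ℝ) : ℝ := ∑' k : ℕ × ℕ, (k.2 : ℝ) * nu1 w μ k

/-- The density map `R(μ) = (R₁(μ), R₂(μ))`. -/
def Rmap (w : ℕ × ℕ → ℝ) (μ : ℝ × ℝ) : ℝ × ℝ := (R1 w μ, R2 w μ)

/-- Dot product of two real vectors. -/
def dotR (a b : ℝ × ℝ) : ℝ := a.1 * b.1 + a.2 * b.2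

/-- Marginal of `ν¹_μ` with respect to the first species. -/
def marg1 (w : ℕ × ℕ → ℝ) (μ : ℝ × ℝ) (k : ℕ) : ℝ := ∑' j : ℕ, nu1 w μ (k, j)

/-- Marginal of `ν¹_μ` with respect to the second species. -/
def marg2 (w : ℕ × ℕ → ℝ) (μ : ℝ × ℝ) (k : ℕ) : ℝ := ∑' j : ℕ, nu1 w μ (j, k)

/-! For a positive sequence `a ≤ 1`, `liminf -(1/k) log a k > 0` means exponential decay
`a k ≤ exp (-ε k)` eventually, which is equivalent to summability of `exp (ε k) a k` for some
`ε > 0`. For the first marginal, Tonelli gives `∑_k exp (ε k) ν^{1,(1)}_μ(k) = z(μ + ε e₁) / z(μ)`.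
Swapping the two species reduces the second marginal to the first. -/

section ExponentialDecay

lemma le_neg_one_div_mul_log_iff {k : ℕ} (hk : 0 < k) {a : ℝ} (ha : 0 < a) (ε : ℝ) :
    ε ≤ -(1 / (k : ℝ)) * Real.log a ↔ a ≤ Real.exp (-(ε * k)) := by
  have hk' : (0 : ℝ) < k := by exact_mod_cast hk
  rw [← Real.log_le_iff_le_exp ha, show -(1 / (k : ℝ)) * Real.log a = -Real.log a / k by ring,
    le_div_iff₀ hk']
  constructor <;> intro h <;> linarith

variable {a : ℕ → ℝ}

lemma exists_summable_exp_mul_iff_eventually_le_exp (ha : ∀ k, 0 ≤ a k) :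
    (∃ ε > 0, Summable (fun k : ℕ => Real.exp (ε * k) * a k)) ↔
      ∃ ε > 0, ∀ᶠ k : ℕ in atTop, a k ≤ Real.exp (-(ε * k)) := by
  constructor
  · rintro ⟨ε, hε, hsum⟩
    refine ⟨ε, hε, ?_⟩
    filter_upwards [hsum.tendsto_atTop_zero.eventually (gt_mem_nhds one_pos)] with k hk
    calc a k = Real.exp (-(ε * k)) * (Real.exp (ε * k) * a k) := by
          rw [← mul_assoc, ← Real.exp_add, neg_add_cancel, Real.exp_zero, one_mul]
      _ ≤ Real.exp (-(ε * k)) * 1 := by gcongr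
      _ = Real.exp (-(ε * k)) := mul_one _
  · rintro ⟨ε, hε, hdecay⟩
    refine ⟨ε / 2, half_pos hε, ?_⟩
    have hgeom : Summable (fun k : ℕ => Real.exp (-(ε / 2)) ^ k) :=
      summable_geometric_of_lt_one (Real.exp_nonneg _) (Real.exp_lt_one_iff.2 (by linarith))
    refine hgeom.of_norm_bounded_eventually_nat ?_
    filter_upwards [hdecay] with k hk
    rw [Real.norm_of_nonneg (mul_nonneg (Real.exp_nonneg _) (ha k)), ← Real.exp_nat_mul]
    calc Real.exp (ε / 2 * k) * a k ≤ Real.exp (ε / 2 * k) * Real.exp (-(ε * k)) := by gcongr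
      _ = Real.exp (k * -(ε / 2)) := by rw [← Real.exp_add]; ring_nf

def decayRate (a : ℕ → ℝ) : EReal :=
  liminf (fun k : ℕ => ((-(1 / (k : ℝ)) * Real.log (a k) : ℝ) : EReal)) atTop

lemma decayRate_nonneg (ha : ∀ k, 0 < a k) (ha1 : ∀ k, a k ≤ 1) : 0 ≤ decayRate a := by
  refine le_liminf_of_le (by isBoundedDefault) ?_
  filter_upwards [eventually_ge_atTop 1] with k hk
  have := (le_neg_one_div_mul_log_iff hk (ha k) 0).2 (by simpa using ha1 k)
  exact_mod_cast this

lemma zero_lt_decayRate_iff (ha : ∀ k, 0 < a k) :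
    0 < decayRate a ↔ ∃ ε > 0, ∀ᶠ k : ℕ in atTop, a k ≤ Real.exp (-(ε * k)) := by
  constructor
  · intro hpos
    obtain ⟨ε, hε0, hε⟩ := EReal.exists_between_coe_real hpos
    refine ⟨ε, by exact_mod_cast hε0, ?_⟩
    filter_upwards [eventually_lt_of_lt_liminf hε, eventually_ge_atTop 1] with k hk hk1
    exact (le_neg_one_div_mul_log_iff hk1 (ha k) ε).1 (EReal.coe_lt_coe_iff.1 hk).le
  · rintro ⟨ε, hε, hdecay⟩
    refine lt_of_lt_of_le (EReal.coe_pos.2 hε) (le_liminf_of_le (by isBoundedDefault) ?_)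
    filter_upwards [hdecay, eventually_ge_atTop 1] with k hk hk1
    exact EReal.coe_le_coe_iff.2 ((le_neg_one_div_mul_log_iff hk1 (ha k) ε).2 hk)

theorem decayRate_eq_zero_iff (ha : ∀ k, 0 < a k) (ha1 : ∀ k, a k ≤ 1) :
    decayRate a = 0 ↔ ∀ ε > 0, ¬ Summable (fun k : ℕ => Real.exp (ε * k) * a k) := by
  rw [← not_iff_not, ← Ne, ← (decayRate_nonneg ha ha1).lt_iff_ne', zero_lt_decayRate_iff ha,
    ← exists_summable_exp_mul_iff_eventually_le_exp (fun k => (ha k).le)]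
  simp only [not_forall, not_not, exists_prop]

end ExponentialDecay

section RowSums

variable {f : ℕ × ℕ → ℝ}

lemma summable_mul_fst_iff (hf : 0 ≤ f) (hs : Summable f) {c : ℕ → ℝ} (hc : 0 ≤ c) :
    Summable (fun p : ℕ × ℕ => c p.1 * f p) ↔ Summable (fun k => c k * ∑' j, f (k, j)) := by
  rw [summable_prod_of_nonneg (fun p => mul_nonneg (hc _) (hf p))]
  simp only [tsum_mul_left]
  exact and_iff_right fun k => (hs.prod_factor k).mul_left (c k)

lemma tsum_row_le_tsum (hf : 0 ≤ f) (hs : Summable f) (k : ℕ) :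
    ∑' j, f (k, j) ≤ ∑' p, f p :=
  (hs.prod_factor k).tsum_le_tsum_of_inj (Prod.mk k) (Prod.mk_right_injective k)
    (fun p _ => hf p) (fun _ => le_rfl) hs

end RowSums

lemma zsummand_add_fst (w : ℕ × ℕ → ℝ) (μ : ℝ × ℝ) (ε : ℝ) :
    zsummand w (μ.1 + ε, μ.2) = fun p => Real.exp (ε * p.1) * zsummand w μ p := by
  funext p
  simp only [zsummand, dotNat]
  rw [mul_left_comm, ← Real.exp_add]
  ring_nf

lemma marg1_eq_tsum_div (w : ℕ × ℕ → ℝ) (μ : ℝ × ℝ) (k : ℕ) :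
    marg1 w μ k = (∑' j, zsummand w μ (k, j)) / zfun w μ :=
  tsum_div_const

section Marginals

variable {w : ℕ × ℕ → ℝ} {μ : ℝ × ℝ}

lemma zsummand_pos (hw : ∀ k, 0 < w k) (μ : ℝ × ℝ) (k : ℕ × ℕ) : 0 < zsummand w μ k :=
  mul_pos (hw k) (Real.exp_pos _)

lemma zfun_pos (hw : ∀ k, 0 < w k) (hz : μ ∈ domz w) : 0 < zfun w μ :=
  Summable.tsum_pos hz (fun p => (zsummand_pos hw μ p).le) 0 (zsummand_pos hw μ 0)

lemma marg1_pos (hw : ∀ k, 0 < w k) (hz : μ ∈ domz w) (k : ℕ) : 0 < marg1 w μ k := by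
  rw [marg1_eq_tsum_div]
  exact div_pos (Summable.tsum_pos (hz.prod_factor k) (fun j => (zsummand_pos hw μ _).le) 0
    (zsummand_pos hw μ _)) (zfun_pos hw hz)

lemma marg1_le_one (hw : ∀ k, 0 < w k) (hz : μ ∈ domz w) (k : ℕ) : marg1 w μ k ≤ 1 := by
  rw [marg1_eq_tsum_div]
  exact div_le_one_of_le₀ (tsum_row_le_tsum (fun p => (zsummand_pos hw μ p).le) hz k)
    (zfun_pos hw hz).le

lemma summable_exp_mul_marg1_iff (hw : ∀ k, 0 < w k) (hz : μ ∈ domz w) (ε : ℝ) :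
    Summable (fun k : ℕ => Real.exp (ε * k) * marg1 w μ k) ↔
      Summable (zsummand w (μ.1 + ε, μ.2)) := by
  rw [zsummand_add_fst, summable_mul_fst_iff (c := fun k : ℕ => Real.exp (ε * k))
    (fun p => (zsummand_pos hw μ p).le) hz (fun _ => (Real.exp_pos _).le)]
  simp only [marg1_eq_tsum_div, ← mul_div_assoc]
  exact summable_div_const_iff (zfun_pos hw hz).ne'

theorem decayRate_marg1_eq_zero_iff (hw : ∀ k, 0 < w k) (hz : μ ∈ domz w) :
    decayRate (marg1 w μ) = 0 ↔ ∀ ε > 0, ¬ Summable (zsummand w (μ.1 + ε, μ.2)) := by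
  simp only [decayRate_eq_zero_iff (marg1_pos hw hz) (marg1_le_one hw hz),
    summable_exp_mul_marg1_iff hw hz]

end Marginals

section Swap

variable (w : ℕ × ℕ → ℝ) (μ : ℝ × ℝ)

lemma zsummand_swap : zsummand (w ∘ Prod.swap) μ.swap = zsummand w μ ∘ Prod.swap := by
  funext k
  simp only [zsummand, dotNat, Function.comp, Prod.fst_swap, Prod.snd_swap, add_comm]

lemma zfun_swap : zfun (w ∘ Prod.swap) μ.swap = zfun w μ := by
  rw [zfun, zsummand_swap]
  exact (Equiv.prodComm ℕ ℕ).tsum_eq _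

lemma marg2_eq_marg1_swap : marg2 w μ = marg1 (w ∘ Prod.swap) μ.swap := by
  funext k
  simp only [marg1, marg2, nu1, zfun_swap, zsummand_swap, Function.comp, Prod.swap_prod_mk]

lemma summable_zsummand_swap_iff :
    Summable (zsummand (w ∘ Prod.swap) μ.swap) ↔ Summable (zsummand w μ) := by
  rw [zsummand_swap]
  exact (Equiv.prodComm ℕ ℕ).summable_iff

end Swap

lemma Dmu_subset_domz {w : ℕ × ℕ → ℝ} (hw : ∀ k, 0 ≤ w k) : Dmu w ⊆ domz w := by
  rintro μ ⟨h₁, h₂⟩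
  refine (h₁.add h₂).of_norm_bounded_eventually ?_
  filter_upwards [eventually_cofinite_ne 0] with k hk
  have hk1 : (1 : ℝ) ≤ k.1 + k.2 := by
    have : 1 ≤ k.1 + k.2 := by
      by_contra h
      exact hk (Prod.ext (by simp; omega) (by simp; omega))
    exact_mod_cast this
  have hz : 0 ≤ zsummand w μ k := mul_nonneg (hw k) (Real.exp_nonneg _)
  rw [Real.norm_of_nonneg hz, ← add_mul]
  exact le_mul_of_one_le_left hz hk1

theorem statement17_general (w : ℕ × ℕ → ℝ) (hw : ∀ k, 0 < w k)
    (μ : ℝ × ℝ) (hμ : μ ∈ Dmu w) :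
    ((Filter.liminf
        (fun k : ℕ => ((-(1 / (k : ℝ)) * Real.log (marg1 w μ k) : ℝ) : EReal)) atTop
        = (0 : EReal)) ↔
      (∀ ε : ℝ, 0 < ε → ¬ Summable (zsummand w (μ.1 + ε, μ.2)))) ∧
    ((Filter.liminf
        (fun k : ℕ => ((-(1 / (k : ℝ)) * Real.log (marg2 w μ k) : ℝ) : EReal)) atTop
        = (0 : EReal)) ↔
      (∀ ε : ℝ, 0 < ε → ¬ Summable (zsummand w (μ.1, μ.2 + ε)))) := by
  have hz : μ ∈ domz w := Dmu_subset_domz (fun k => (hw k).le) hμ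
  refine ⟨decayRate_marg1_eq_zero_iff hw hz, ?_⟩
  have hz' : μ.swap ∈ domz (w ∘ Prod.swap) := (summable_zsummand_swap_iff w μ).2 hz
  rw [marg2_eq_marg1_swap]
  refine (decayRate_marg1_eq_zero_iff (fun k => hw k.swap) hz').trans ?_
  simp only [Prod.fst_swap, Prod.snd_swap]
  refine forall₂_congr fun ε _ => not_congr ?_
  exact summable_zsummand_swap_iff w (μ.1, μ.2 + ε)

/-- **subexponential tail characterization.** For `μ ∈ D_μ`, the marginal
of `ν¹_μ` with respect to species `i` has subexponential tail, i.e.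
`liminf_{k→∞} -(1/k) log ν^{1,(i)}_μ(k) = 0`, iff `z(μ + ε e_i) = ∞` for all `ε > 0`. -/
theorem statement17 (w : ℕ × ℕ → ℝ) (hw : ∀ k, 0 < w k) (hexp : ExpBounded w)
    (μ : ℝ × ℝ) (hμ : μ ∈ Dmu w) :
    ((Filter.liminf
        (fun k : ℕ => ((-(1 / (k : ℝ)) * Real.log (marg1 w μ k) : ℝ) : EReal)) atTop
        = (0 : EReal)) ↔
      (∀ ε : ℝ, 0 < ε → ¬ Summable (zsummand w (μ.1 + ε, μ.2)))) ∧
    ((Filter.liminf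
        (fun k : ℕ => ((-(1 / (k : ℝ)) * Real.log (marg2 w μ k) : ℝ) : EReal)) atTop
        = (0 : EReal)) ↔
      (∀ ε : ℝ, 0 < ε → ¬ Summable (zsummand w (μ.1, μ.2 + ε)))) :=
  statement17_general w hw μ hμ
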